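/- If X = x is a sufficient cause (SC1–SC4) of φ in (M, u) and X = x is also an actual cause (AC1–AC3) of φ in (M, u), then they need not coincide with weak actual causes: there exists a causal setting (namely the disjunctive forest fire model with U_L = U_MD = 1) and a conjunction (L = 1 ∧ MD = 1) that is a weak actual cause (AC1–AC2) of FF = 1 but is not a sufficient cause of FF = 1 (SC4 minimality fails), while L = 1 alone is a sufficient cause of FF = 1. -/

import Mathlib

namespace Causal

/-- A causal model: a structural equation for each endogenous variable,
    taking a context (setting of exogenous variables) and a setting of the
    endogenous variables. -/
structure Model (Vu Vv : Type) (Du : Vu → Type) (Dv : Vv → Type) where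
  F : (i : Vv) → ((u : Vu) → Du u) → ((j : Vv) → Dv j) → Dv i

variable {Vu Vv : Type} {Du : Vu → Type} {Dv : Vv → Type}

abbrev Ctx (Du : Vu → Type) := (u : Vu) → Du u
abbrev World (Dv : Vv → Type) := (i : Vv) → Dv i
abbrev Event (Dv : Vv → Type) := World Dv → Prop
/-- A conjunction of primitive events X = x, as a partial assignment. -/
abbrev PA (Dv : Vv → Type) := (i : Vv) → Option (Dv i)

/-- Acyclicity: a well-founded strict order such that each structural equation
    depends only on endogenous variables strictly below it. -/
def Model.Acyclic (M : Model Vu Vv Du Dv) : Prop :=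
  ∃ r : Vv → Vv → Prop, WellFounded r ∧
    ∀ (i : Vv) (u : Ctx Du) (s s' : World Dv),
      (∀ j, r j i → s j = s' j) → M.F i u s = M.F i u s'

/-- s is a solution of the causal setting (M, u). -/
def Model.Solves (M : Model Vu Vv Du Dv) (u : Ctx Du) (s : World Dv) : Prop :=
  ∀ i, s i = M.F i u s

/-- (M, u) ⊨ φ : every solution (in particular the unique actual world) satisfies φ. -/
def Model.sat (M : Model Vu Vv Du Dv) (u : Ctx Du) (φ : Event Dv) : Prop :=
  ∀ s, M.Solves u s → φ s

namespace PA

def event (g : PA Dv) : Event Dv := fun s => ∀ i v, g i = some v → s i = v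

def subset (g h : PA Dv) : Prop := ∀ i v, g i = some v → h i = some v

def ssubset (g h : PA Dv) : Prop := subset g h ∧ g ≠ h

def union (g h : PA Dv) : PA Dv := fun i => (g i).orElse (fun _ => h i)

def sameDom (g h : PA Dv) : Prop := ∀ i, (g i).isSome ↔ (h i).isSome

def Nonempty (g : PA Dv) : Prop := ∃ i, (g i).isSome

def disjoint (g h : PA Dv) : Prop := ∀ i, (g i).isSome → h i = none

/-- Pointwise difference condition: x_i ≠ x_i' for each X_i ∈ X. -/
def diff (g h : PA Dv) : Prop := ∀ i v v', g i = some v → h i = some v' → v ≠ v'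

end PA

/-- Intervention M_{X←x}. -/
def Model.intervene (M : Model Vu Vv Du Dv) (g : PA Dv) : Model Vu Vv Du Dv where
  F i u s := (g i).getD (M.F i u s)

/-- AC1 : (M,u) ⊨ (X = x) ∧ φ. -/
def AC1 (M : Model Vu Vv Du Dv) (u : Ctx Du) (g : PA Dv) (φ : Event Dv) : Prop :=
  M.sat u (fun s => g.event s ∧ φ s)

/-- AC2 : there are W ⊆ V (with its actual setting w) and a setting x' of X with
    (M,u) ⊨ [X ← x', W ← w]¬φ. -/
def AC2 (M : Model Vu Vv Du Dv) (u : Ctx Du) (g : PA Dv) (φ : Event Dv) : Prop :=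
  ∃ w x' : PA Dv, x'.sameDom g ∧ M.sat u w.event ∧
    (M.intervene (x'.union w)).sat u (fun s => ¬ φ s)

/-- Weak actual cause: AC1–AC2. -/
def WeakCause (M : Model Vu Vv Du Dv) (u : Ctx Du) (g : PA Dv) (φ : Event Dv) : Prop :=
  AC1 M u g φ ∧ AC2 M u g φ

/-- Actual cause: AC1–AC3. -/
def ActualCause (M : Model Vu Vv Du Dv) (u : Ctx Du) (g : PA Dv) (φ : Event Dv) : Prop :=
  WeakCause M u g φ ∧ ∀ h : PA Dv, h.ssubset g → ¬ WeakCause M u h φ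

/-- X = x is a partial cause (subset of a cause) w.r.t. a notion of cause. -/
def PartialCause (Cause : Model Vu Vv Du Dv → Ctx Du → PA Dv → Event Dv → Prop)
    (M : Model Vu Vv Du Dv) (u : Ctx Du) (g : PA Dv) (φ : Event Dv) : Prop :=
  ∃ h : PA Dv, g.subset h ∧ Cause M u h φ

/-- Some conjunct of g is part of an actual cause of φ. -/
def IntersectsActualCause (M : Model Vu Vv Du Dv) (u : Ctx Du) (g : PA Dv) (φ : Event Dv) : Prop :=
  ∃ (i : Vv) (v : Dv i) (c : PA Dv), g i = some v ∧ c i = some v ∧ ActualCause M u c φ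

/-- Sufficient cause, clauses SC1–SC3. -/
def SuffCauseCore (M : Model Vu Vv Du Dv) (u : Ctx Du) (g : PA Dv) (φ : Event Dv) : Prop :=
  AC1 M u g φ ∧ IntersectsActualCause M u g φ ∧
    ∀ u' : Ctx Du, (M.intervene g).sat u' φ

/-- Sufficient cause: SC1–SC4. -/
def SuffCause (M : Model Vu Vv Du Dv) (u : Ctx Du) (g : PA Dv) (φ : Event Dv) : Prop :=
  SuffCauseCore M u g φ ∧ ∀ h : PA Dv, h.ssubset g → ¬ SuffCauseCore M u h φ

/-! ### Original HP explanations -/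

/-- EX2 : g is a weak actual cause of φ in every plausible context where g holds. -/
def EX2 (M : Model Vu Vv Du Dv) (K : Set (Ctx Du)) (g : PA Dv) (φ : Event Dv) : Prop :=
  ∀ u ∈ K, M.sat u g.event → WeakCause M u g φ

/-- Original HP explanation: EX1–EX4. -/
def OrigExpl (M : Model Vu Vv Du Dv) (K : Set (Ctx Du)) (g : PA Dv) (φ : Event Dv) : Prop :=
  (∀ u ∈ K, M.sat u φ) ∧
  EX2 M K g φ ∧
  (∀ h : PA Dv, h.ssubset g → ¬ EX2 M K h φ) ∧
  ((∃ u ∈ K, M.sat u (fun s => ¬ g.event s)) ∧ (∃ u' ∈ K, M.sat u' g.event))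

/-! ### Modified HP explanations -/

/-- EX1' : (a) g intersects an actual cause in any plausible context where g and φ hold,
    and (b) g is sufficient to bring about φ in any plausible context. -/
def EX1' (M : Model Vu Vv Du Dv) (K : Set (Ctx Du)) (g : PA Dv) (φ : Event Dv) : Prop :=
  ∀ u ∈ K,
    (M.sat u (fun s => g.event s ∧ φ s) → IntersectsActualCause M u g φ) ∧
    (M.intervene g).sat u φ

/-- Modified HP explanation: EX1'–EX3'. -/
def ModExpl (M : Model Vu Vv Du Dv) (K : Set (Ctx Du)) (g : PA Dv) (φ : Event Dv) : Prop :=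
  EX1' M K g φ ∧
  (∀ h : PA Dv, h.ssubset g → ¬ EX1' M K h φ) ∧
  (∃ u ∈ K, M.sat u (fun s => g.event s ∧ φ s))

/-- EX4' : non-triviality. -/
def EX4' (M : Model Vu Vv Du Dv) (K : Set (Ctx Du)) (g : PA Dv) (φ : Event Dv) : Prop :=
  ∃ u ∈ K, M.sat u (fun s => ¬ g.event s ∧ φ s)

/-- Non-trivial modified HP explanation: EX1'–EX4'. -/
def ModExplNT (M : Model Vu Vv Du Dv) (K : Set (Ctx Du)) (g : PA Dv) (φ : Event Dv) : Prop :=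
  ModExpl M K g φ ∧ EX4' M K g φ

/-! ### Borner explanations -/

/-- E1–E2, with witness S = s. -/
def BornerE12With (M : Model Vu Vv Du Dv) (K : Set (Ctx Du)) (g s : PA Dv) (φ : Event Dv) : Prop :=
  g.disjoint s ∧
  ∀ u ∈ K, (M.sat u g.event → SuffCause M u (g.union s) φ) ∧ M.sat u s.event

def BornerE12 (M : Model Vu Vv Du Dv) (K : Set (Ctx Du)) (g : PA Dv) (φ : Event Dv) : Prop :=
  ∃ s : PA Dv, BornerE12With M K g s φ

/-- Potential Borner explanation: E1–E4. -/
def PotBorner (M : Model Vu Vv Du Dv) (K : Set (Ctx Du)) (g : PA Dv) (φ : Event Dv) : Prop :=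
  BornerE12 M K g φ ∧
  (∃ u ∈ K, M.sat u (fun s => g.event s ∧ φ s)) ∧
  (∃ u ∈ K, M.sat u (fun s => ¬ g.event s ∧ φ s))

/-- Parsimonious potential Borner explanation: E1–E4, E6. -/
def ParsPotBorner (M : Model Vu Vv Du Dv) (K : Set (Ctx Du)) (g : PA Dv) (φ : Event Dv) : Prop :=
  PotBorner M K g φ ∧ ∀ h : PA Dv, h.ssubset g → ¬ BornerE12 M K h φ

/-- Actual Borner explanation: E1–E3, E5. -/
def ActBorner (M : Model Vu Vv Du Dv) (K : Set (Ctx Du)) (g : PA Dv) (φ : Event Dv) : Prop :=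
  BornerE12 M K g φ ∧
  (∃ u ∈ K, M.sat u (fun s => g.event s ∧ φ s)) ∧
  (∀ u ∈ K, M.sat u (fun s => g.event s ∧ φ s))

/-! ### Contrastive causes (CC1–CC5), parameterised by a notion of cause -/

/-- CC1–CC4 for the pair ⟨g, g'⟩ and ⟨φ, ψ⟩. -/
def CCcore (Cause : Model Vu Vv Du Dv → Ctx Du → PA Dv → Event Dv → Prop)
    (M : Model Vu Vv Du Dv) (u : Ctx Du) (g g' : PA Dv) (φ ψ : Event Dv) : Prop :=
  g.sameDom g' ∧
  PartialCause Cause M u g φ ∧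
  M.sat u (fun s => ¬ ψ s) ∧
  (∃ w : PA Dv, w.Nonempty ∧ PartialCause Cause (M.intervene w) u g' ψ) ∧
  g.diff g'

/-- Contrastive cause: CC1–CC5. -/
def ContrastiveCause (Cause : Model Vu Vv Du Dv → Ctx Du → PA Dv → Event Dv → Prop)
    (M : Model Vu Vv Du Dv) (u : Ctx Du) (g g' : PA Dv) (φ ψ : Event Dv) : Prop :=
  CCcore Cause M u g g' φ ψ ∧
  ∀ h h' : PA Dv, g.subset h → g'.subset h' → CCcore Cause M u h h' φ ψ → h = g ∧ h' = g'

/-- Strict refinement of a pair (used for pair-minimality clauses). -/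
def PairSSub (h h' g g' : PA Dv) : Prop :=
  PA.subset h g ∧ PA.subset h' g' ∧ ¬ (h = g ∧ h' = g')

/-! ### Miller contrastive explanations (CE1–CE4) -/

/-- CE2 : contrastive weak actual cause in every plausible context where g holds. -/
def CE2 (M : Model Vu Vv Du Dv) (K : Set (Ctx Du)) (g g' : PA Dv) (φ ψ : Event Dv) : Prop :=
  ∀ u ∈ K, M.sat u g.event → ContrastiveCause WeakCause M u g g' φ ψ

/-- Miller contrastive explanation: CE1–CE4. -/
def MillerCE (M : Model Vu Vv Du Dv) (K : Set (Ctx Du)) (g g' : PA Dv) (φ ψ : Event Dv) : Prop :=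
  (∀ u ∈ K, M.sat u (fun s => φ s ∧ ¬ ψ s)) ∧
  CE2 M K g g' φ ψ ∧
  (∀ h h' : PA Dv, PairSSub h h' g g' → ¬ CE2 M K h h' φ ψ) ∧
  (((∃ u ∈ K, M.sat u (fun s => ¬ g.event s)) ∧ (∃ u' ∈ K, M.sat u' g.event)) ∧
   (∃ w : PA Dv, w.Nonempty ∧ w ≠ g ∧
     (∃ u ∈ K, (M.intervene w).sat u (fun s => ¬ g'.event s)) ∧
     (∃ u' ∈ K, (M.intervene w).sat u' g'.event)))

/-! ### Modular contrastive explanations (Definition 3), parameterised by a notion of explanation -/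

/-- CE1'–CE3'. -/
def ModularCore (Expl : Model Vu Vv Du Dv → Set (Ctx Du) → PA Dv → Event Dv → Prop)
    (M : Model Vu Vv Du Dv) (K : Set (Ctx Du)) (g g' : PA Dv) (φ ψ : Event Dv) : Prop :=
  g.sameDom g' ∧
  (∃ h : PA Dv, g.subset h ∧ Expl M K h φ) ∧
  (∃ w : PA Dv, w.Nonempty ∧ ∃ h : PA Dv, g'.subset h ∧ Expl (M.intervene w) K h ψ) ∧
  g.diff g'

/-- Modular contrastive explanation: CE1'–CE4'. -/
def Modular (Expl : Model Vu Vv Du Dv → Set (Ctx Du) → PA Dv → Event Dv → Prop)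
    (M : Model Vu Vv Du Dv) (K : Set (Ctx Du)) (g g' : PA Dv) (φ ψ : Event Dv) : Prop :=
  ModularCore Expl M K g g' φ ψ ∧
  ∀ h h' : PA Dv, g.subset h → g'.subset h' → ModularCore Expl M K h h' φ ψ → h = g ∧ h' = g'

/-! ### Modified HP contrastive explanations (Definition 1: CH1–CH4) -/

/-- CH1(a)–(c) for a single context u. -/
def CH1abc (M : Model Vu Vv Du Dv) (u : Ctx Du) (g g' : PA Dv) (φ ψ : Event Dv) : Prop :=
  (M.sat u (fun s => g.event s ∧ φ s ∧ ¬ ψ s) →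
    ∃ (i : Vv) (v v' : Dv i) (c c' : PA Dv), g i = some v ∧ g' i = some v' ∧
      c i = some v ∧ c' i = some v' ∧ ContrastiveCause ActualCause M u c c' φ ψ) ∧
  (∃ s s' : PA Dv, s.sameDom s' ∧ g.disjoint s ∧
    (M.intervene (g.union s)).sat u φ ∧
    (∃ w : PA Dv, w.Nonempty ∧ w ≠ g ∧
      ((M.intervene w).intervene (g'.union s')).sat u ψ)) ∧
  g.diff g'

/-- CH1 : for each u ∈ K, (a)–(c) and maximality (d). -/
def CH1 (M : Model Vu Vv Du Dv) (K : Set (Ctx Du)) (g g' : PA Dv) (φ ψ : Event Dv) : Prop :=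
  ∀ u ∈ K, CH1abc M u g g' φ ψ ∧
    ∀ h h' : PA Dv, g.subset h → g'.subset h' → CH1abc M u h h' φ ψ → h = g ∧ h' = g'

/-- Modified HP contrastive explanation: CH1–CH3. -/
def ModCE (M : Model Vu Vv Du Dv) (K : Set (Ctx Du)) (g g' : PA Dv) (φ ψ : Event Dv) : Prop :=
  CH1 M K g g' φ ψ ∧
  (∀ h h' : PA Dv, PairSSub h h' g g' → ¬ CH1 M K h h' φ ψ) ∧
  (∃ u ∈ K, M.sat u (fun s => g.event s ∧ φ s ∧ ¬ ψ s))

/-- CH4 : non-triviality. -/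
def CH4 (M : Model Vu Vv Du Dv) (K : Set (Ctx Du)) (g g' : PA Dv) (φ ψ : Event Dv) : Prop :=
  (∃ u ∈ K, M.sat u (fun s => ¬ g.event s ∧ φ s)) ∧
  (∃ w : PA Dv, w.Nonempty ∧ w ≠ g ∧
    ∃ u ∈ K, (M.intervene w).sat u (fun s => ¬ g'.event s ∧ ψ s))

/-! ### Borner contrastive explanations (Definition 2: CB1–CB6) -/

/-- CB1–CB2 with witness pair ⟨S = s, S = s'⟩. -/
def CB12With (M : Model Vu Vv Du Dv) (K : Set (Ctx Du)) (g g' s s' : PA Dv) (φ ψ : Event Dv) : Prop :=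
  s.sameDom s' ∧ g.disjoint s ∧
  ∀ u ∈ K,
    (M.sat u g.event → ContrastiveCause SuffCause M u (g.union s) (g'.union s') φ ψ) ∧
    M.sat u s.event ∧
    (∃ w : PA Dv, w.Nonempty ∧ w ≠ g ∧ (M.intervene w).sat u s'.event)

def CB12 (M : Model Vu Vv Du Dv) (K : Set (Ctx Du)) (g g' : PA Dv) (φ ψ : Event Dv) : Prop :=
  ∃ s s' : PA Dv, CB12With M K g g' s s' φ ψ

/-- Potential Borner contrastive explanation: CB1–CB4. -/
def PotBornerCE (M : Model Vu Vv Du Dv) (K : Set (Ctx Du)) (g g' : PA Dv) (φ ψ : Event Dv) : Prop :=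
  CB12 M K g g' φ ψ ∧
  (∃ u ∈ K, M.sat u (fun s => g.event s ∧ φ s ∧ ¬ ψ s)) ∧
  CH4 M K g g' φ ψ

/-- Actual Borner contrastive explanation: CB1–CB3, CB5. -/
def ActBornerCE (M : Model Vu Vv Du Dv) (K : Set (Ctx Du)) (g g' : PA Dv) (φ ψ : Event Dv) : Prop :=
  CB12 M K g g' φ ψ ∧
  (∃ u ∈ K, M.sat u (fun s => g.event s ∧ φ s ∧ ¬ ψ s)) ∧
  (∀ u ∈ K, M.sat u (fun s => g.event s ∧ φ s ∧ ¬ ψ s))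

end Causal

namespace DFF
open Causal

inductive XU | uL | uMD
  deriving DecidableEq
inductive XV | L | MD | FF
  deriving DecidableEq

/-- The disjunctive forest fire model: L := U_L, MD := U_MD, FF := L ∨ MD. -/
def M : Model XU XV (fun _ => Bool) (fun _ => Bool) where
  F i u s :=
    match i with
    | .L => u .uL
    | .MD => u .uMD
    | .FF => s .L || s .MD

/-- The event FF = 1. -/
def φFF : Event (fun _ : XV => Bool) := fun s => s .FF = true

/-- The conjunction L = 1. -/
def paL : PA (fun _ : XV => Bool) := fun i =>
  match i with | .L => some true | _ => none

/-- The conjunction MD = 1. -/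
def paMD : PA (fun _ : XV => Bool) := fun i =>
  match i with | .MD => some true | _ => none

/-- The conjunction L = 1 ∧ MD = 1. -/
def paLMD : PA (fun _ : XV => Bool) := fun i =>
  match i with | .L => some true | .MD => some true | _ => none

/-- The conjunction FF = 1. -/
def paFF : PA (fun _ : XV => Bool) := fun i =>
  match i with | .FF => some true | _ => none

end DFF

/-!
In the context U_L = U_MD = 1 the actual world sets L, MD and FF to true. Setting L and MD to
false puts the fire out, so L = 1 ∧ MD = 1 is a weak cause of FF = 1. A strict sub-conjunction
omits L or MD, and any intervention X ← x', W ← w with w the actual values leaves that variable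
true, hence the fire burning: so L = 1 ∧ MD = 1 is even an actual cause, and L = 1 is part of it.
Since L = 1 forces FF = 1 in every context, L = 1 satisfies SC1–SC3, which breaks SC4 for
L = 1 ∧ MD = 1; and L = 1 itself is minimal because the empty conjunction meets no actual cause.
-/

namespace Causal

variable {Vu Vv : Type} {Du : Vu → Type} {Dv : Vv → Type}

namespace PA

theorem subset.eq_none {g h : PA Dv} (hgh : g.subset h) {i : Vv} (hi : h i = none) :
    g i = none := by
  cases hg : g i with
  | none => rfl
  | some v => simpa [hi] using hgh i v hg

theorem ssubset.exists_eq_none {g h : PA Dv} (hgh : g.ssubset h) :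
    ∃ i, (h i).isSome ∧ g i = none := by
  by_contra! hall
  refine hgh.2 (funext fun i => ?_)
  cases hh : h i with
  | none => exact hgh.1.eq_none hh
  | some v =>
    obtain ⟨v', hv'⟩ := Option.ne_none_iff_exists'.mp (hall i (by simp [hh]))
    rw [hv', ← hh, hgh.1 i v' hv']

theorem sameDom.eq_none {g h : PA Dv} (hgh : g.sameDom h) {i : Vv} (hi : h i = none) :
    g i = none := by
  simpa [hi] using hgh i

theorem union_apply_of_eq_none {g : PA Dv} (h : PA Dv) {i : Vv} (hi : g i = none) :
    g.union h i = h i := by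
  simp [union, hi]

theorem getD_eq_of_event {g : PA Dv} {s : World Dv} (hg : g.event s) (i : Vv) :
    (g i).getD (s i) = s i := by
  cases hi : g i with
  | none => rfl
  | some v => exact (hg i v hi).symm

end PA

theorem Model.intervene_none (M : Model Vu Vv Du Dv) : M.intervene (fun _ => none) = M := rfl

theorem Model.sat_iff_of_solves_iff {M : Model Vu Vv Du Dv} {u : Ctx Du} {t : World Dv}
    (ht : ∀ s, M.Solves u s ↔ s = t) (φ : Event Dv) : M.sat u φ ↔ φ t := by
  simp [Model.sat, ht]

theorem not_intersectsActualCause_of_forall_eq_none {M : Model Vu Vv Du Dv} {u : Ctx Du}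
    {g : PA Dv} (hg : ∀ i, g i = none) (φ : Event Dv) : ¬ IntersectsActualCause M u g φ := by
  rintro ⟨i, v, -, hgi, -⟩
  simp [hg i] at hgi

theorem not_suffCause_of_ssubset {M : Model Vu Vv Du Dv} {u : Ctx Du} {g h : PA Dv}
    {φ : Event Dv} (hgh : h.ssubset g) (hh : SuffCauseCore M u h φ) : ¬ SuffCause M u g φ :=
  fun hg => hg.2 h hgh hh

end Causal

namespace DFF

open Causal

def solution (p : PA (fun _ : XV => Bool)) (u : Ctx (fun _ : XU => Bool)) :
    World (fun _ : XV => Bool)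
  | .L => (p .L).getD (u .uL)
  | .MD => (p .MD).getD (u .uMD)
  | .FF => (p .FF).getD ((p .L).getD (u .uL) || (p .MD).getD (u .uMD))

theorem solves_intervene_iff (p : PA (fun _ : XV => Bool)) (u : Ctx (fun _ : XU => Bool))
    (s : World (fun _ : XV => Bool)) : (M.intervene p).Solves u s ↔ s = solution p u := by
  constructor
  · intro hs
    have hL := hs .L
    have hMD := hs .MD
    have hFF := hs .FF
    simp only [Model.intervene, M] at hL hMD hFF
    funext i
    cases i
    · exact hL
    · exact hMD
    · rw [hFF, hL, hMD]; rfl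
  · rintro rfl i
    cases i <;> rfl

theorem sat_intervene_iff (p : PA (fun _ : XV => Bool)) (u : Ctx (fun _ : XU => Bool))
    (φ : Event (fun _ : XV => Bool)) : (M.intervene p).sat u φ ↔ φ (solution p u) :=
  Model.sat_iff_of_solves_iff (solves_intervene_iff p u) φ

theorem sat_iff (u : Ctx (fun _ : XU => Bool)) (φ : Event (fun _ : XV => Bool)) :
    M.sat u φ ↔ φ (solution (fun _ => none) u) :=
  M.intervene_none ▸ sat_intervene_iff _ u φ

theorem solution_none_true : solution (fun _ => none) (fun _ => true) = fun _ => true := by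
  funext i
  cases i <;> rfl

theorem weakCause_LMD : WeakCause M (fun _ => true) paLMD φFF := by
  refine ⟨?_, fun _ => none, fun i => if i = .FF then none else some false, ?_, ?_, ?_⟩
  · rw [AC1, sat_iff, solution_none_true]
    refine ⟨fun i v hv => ?_, rfl⟩
    cases i <;> simp_all [paLMD]
  · intro i
    cases i <;> simp [paLMD]
  · intro _ _ i v hv
    simp at hv
  · rw [sat_intervene_iff]
    simp [solution, PA.union, φFF]

theorem ssubset_paLMD {h : PA (fun _ : XV => Bool)} (hh : h.ssubset paLMD) :
    h .FF = none ∧ (h .L = none ∨ h .MD = none) := by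
  refine ⟨hh.1.eq_none rfl, ?_⟩
  obtain ⟨i, hi, hhi⟩ := hh.exists_eq_none
  cases i
  · exact .inl hhi
  · exact .inr hhi
  · simp [paLMD] at hi

theorem not_weakCause_of_ssubset_paLMD {h : PA (fun _ : XV => Bool)} (hh : h.ssubset paLMD) :
    ¬ WeakCause M (fun _ => true) h φFF := by
  rintro ⟨-, w, x', hdom, hw, hnot⟩
  rw [sat_iff, solution_none_true] at hw
  rw [sat_intervene_iff] at hnot
  -- where `h` is silent, so is `x'`, and `w` can only restore the actual value `true`
  have hkeep : ∀ i, h i = none → (x'.union w i).getD true = true := fun i hi => by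
    rw [PA.union_apply_of_eq_none w (hdom.eq_none hi)]
    exact PA.getD_eq_of_event hw i
  obtain ⟨hFF, hL | hMD⟩ := ssubset_paLMD hh <;>
  · apply hnot
    have hkeepFF := hkeep _ hFF
    cases hp : x'.union w .FF <;> simp_all [solution, φFF]

theorem actualCause_LMD : ActualCause M (fun _ => true) paLMD φFF :=
  ⟨weakCause_LMD, fun _ hh => not_weakCause_of_ssubset_paLMD hh⟩

theorem suffCauseCore_L : SuffCauseCore M (fun _ => true) paL φFF := by
  refine ⟨?_, ⟨.L, true, paLMD, rfl, rfl, actualCause_LMD⟩, fun u => ?_⟩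
  · rw [AC1, sat_iff, solution_none_true]
    refine ⟨fun i v hv => ?_, rfl⟩
    cases i <;> simp_all [paL]
  · rw [sat_intervene_iff]
    simp [solution, paL, φFF]

theorem eq_none_of_ssubset_paL {h : PA (fun _ : XV => Bool)} (hh : h.ssubset paL) (i : XV) :
    h i = none := by
  obtain ⟨j, hj, hhj⟩ := hh.exists_eq_none
  cases j <;> cases i <;> first | exact hhj | exact hh.1.eq_none rfl | simp [paL] at hj

theorem suffCause_L : SuffCause M (fun _ => true) paL φFF :=
  ⟨suffCauseCore_L, fun _ hh hcore =>
    not_intersectsActualCause_of_forall_eq_none (eq_none_of_ssubset_paL hh) φFF hcore.2.1⟩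

theorem paL_ssubset_paLMD : paL.ssubset paLMD := by
  refine ⟨fun i v hv => ?_, fun h => ?_⟩
  · cases i <;> simp_all [paL, paLMD]
  · simpa [paL, paLMD] using congrFun h .MD

end DFF

/-- in the disjunctive forest fire model with U_L = U_MD = 1,
    L = 1 ∧ MD = 1 is a weak actual cause of FF = 1 but not a sufficient cause
    (SC4 minimality fails), while L = 1 alone is a sufficient cause of FF = 1. -/
theorem dff_weak_vs_sufficient :
    Causal.WeakCause DFF.M (fun _ => true) DFF.paLMD DFF.φFF ∧
    ¬ Causal.SuffCause DFF.M (fun _ => true) DFF.paLMD DFF.φFF ∧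
    Causal.SuffCause DFF.M (fun _ => true) DFF.paL DFF.φFF :=
  ⟨DFF.weakCause_LMD,
    Causal.not_suffCause_of_ssubset DFF.paL_ssubset_paLMD DFF.suffCauseCore_L,
    DFF.suffCause_L⟩
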